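/- arXiv:2603.01734 — 4 statements merged into one kernel-verified Lean document; each statement's English description precedes it below -/
import Mathlib

section
/- Let {Δ_k} be a non-negative, monotone non-increasing real sequence converging to 0 and suppose there exist θ ∈ (0, 1/2] and c̃ > 0 such that Δ_{k+1}^{2θ} ≤ c̃ (Δ_{k-1} − Δ_{k+1}) for all k ≥ 1. Then there exist C > 0 and ω ∈ (0,1) such that Δ_k ≤ C ω^k for all k. -/
theorem stmt0 (Δ : ℕ → ℝ) (hnn : ∀ k, 0 ≤ Δ k) (hmono : ∀ k, Δ (k+1) ≤ Δ k)
    (hlim : Filter.Tendsto Δ Filter.atTop (nhds 0))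
    (θ c : ℝ) (hθ0 : 0 < θ) (hθ1 : θ ≤ 1/2) (hc : 0 < c)
    (hrec : ∀ k : ℕ, 1 ≤ k → (Δ (k+1)) ^ (2*θ) ≤ c * (Δ (k-1) - Δ (k+1))) :
    ∃ C > 0, ∃ ω : ℝ, 0 < ω ∧ ω < 1 ∧ ∀ k, Δ k ≤ C * ω ^ k := by
  have hanti : Antitone Δ := antitone_nat_of_succ_le hmono
  -- find N with Δ n ≤ 1 for n ≥ N
  obtain ⟨N, hN⟩ : ∃ N, ∀ n ≥ N, Δ n ≤ 1 := by
    have := (hlim.eventually (gt_mem_nhds (by norm_num : (0:ℝ) < 1)))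
    rw [Filter.eventually_atTop] at this
    obtain ⟨N, hN⟩ := this
    exact ⟨N, fun n hn => (hN n hn).le⟩
  set r : ℝ := c / (c + 1) with hrdef
  have hc1 : (0:ℝ) < c + 1 := by linarith
  have hr0 : 0 < r := div_pos hc hc1
  have hr1 : r < 1 := by rw [hrdef, div_lt_one hc1]; linarith
  set ω : ℝ := Real.sqrt r with hωdef
  have hω0 : 0 < ω := Real.sqrt_pos.mpr hr0
  have hω1 : ω < 1 := by
    rw [hωdef, show (1:ℝ) = Real.sqrt 1 by simp]
    exact Real.sqrt_lt_sqrt hr0.le hr1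
  have hωsq : ω ^ 2 = r := Real.sq_sqrt hr0.le
  -- key two-step contraction
  have hstep : ∀ n, N ≤ n → Δ (n + 2) ≤ r * Δ n := by
    intro n hn
    have h1 := hrec (n + 1) (by omega)
    simp only [Nat.add_sub_cancel] at h1
    have hle1 : Δ (n + 2) ≤ 1 := hN _ (by omega)
    have hpow : Δ (n + 2) ≤ (Δ (n + 2)) ^ (2 * θ) := by
      rcases eq_or_lt_of_le (hnn (n + 2)) with h | h
      · rw [← h, Real.zero_rpow (by positivity)]
      · calc Δ (n + 2) = (Δ (n + 2)) ^ (1:ℝ) := by rw [Real.rpow_one]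
          _ ≤ (Δ (n + 2)) ^ (2 * θ) :=
            Real.rpow_le_rpow_of_exponent_ge h hle1 (by linarith)
    have key : Δ (n + 2) ≤ c * (Δ n - Δ (n + 2)) := le_trans hpow h1
    rw [hrdef, div_mul_eq_mul_div, le_div_iff₀ hc1]
    nlinarith
  -- geometric decay for even offsets
  have h2 : ∀ j, Δ (N + 2 * j) ≤ r ^ j * Δ N := by
    intro j
    induction j with
    | zero => simp
    | succ j ih =>
      have : Δ (N + 2 * (j + 1)) = Δ ((N + 2 * j) + 2) := by ring_nf
      rw [this, pow_succ]
      calc Δ ((N + 2 * j) + 2) ≤ r * Δ (N + 2 * j) := hstep _ (by omega)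
        _ ≤ r * (r ^ j * Δ N) := by
            exact mul_le_mul_of_nonneg_left ih hr0.le
        _ = r ^ j * r * Δ N := by ring
  have hΔ0 : Δ 0 + 1 > 0 := by have := hnn 0; linarith
  refine ⟨(Δ 0 + 1) / ω ^ (N + 1), div_pos hΔ0 (by positivity), ω, hω0, hω1, ?_⟩
  intro k
  rcases le_or_gt k (N + 1) with hk | hk
  · -- small k: bound by constant
    have h1 : Δ k ≤ Δ 0 + 1 := by have := hanti (Nat.zero_le k); linarith
    have h2 : ω ^ (N + 1) ≤ ω ^ k := pow_le_pow_of_le_one hω0.le hω1.le hk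
    calc Δ k ≤ Δ 0 + 1 := h1
      _ = (Δ 0 + 1) / ω ^ (N + 1) * ω ^ (N + 1) := by field_simp
      _ ≤ (Δ 0 + 1) / ω ^ (N + 1) * ω ^ k := by
          apply mul_le_mul_of_nonneg_left h2 (by positivity)
  · -- large k
    set m := k - N with hm
    have hm1 : 1 ≤ m := by omega
    have hkm : k = N + m := by omega
    have hle : Δ k ≤ Δ (N + 2 * (m / 2)) := by
      apply hanti; omega
    have hbound : Δ k ≤ ω ^ (2 * (m / 2)) * Δ N := by
      calc Δ k ≤ Δ (N + 2 * (m / 2)) := hle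
        _ ≤ r ^ (m / 2) * Δ N := h2 _
        _ = ω ^ (2 * (m / 2)) * Δ N := by
            rw [pow_mul, hωsq]
    have hexp : ω ^ (2 * (m / 2)) ≤ ω ^ (m - 1) :=
      pow_le_pow_of_le_one hω0.le hω1.le (by omega)
    have hΔN : Δ N ≤ Δ 0 + 1 := by have := hanti (Nat.zero_le N); linarith
    have hfinal : Δ k ≤ ω ^ (m - 1) * (Δ 0 + 1) := by
      calc Δ k ≤ ω ^ (2 * (m / 2)) * Δ N := hbound
        _ ≤ ω ^ (m - 1) * (Δ 0 + 1) := by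
            apply mul_le_mul hexp hΔN (hnn N) (by positivity)
    have hωk : ω ^ k = ω ^ (N + 1) * ω ^ (m - 1) := by
      rw [← pow_add]; congr 1; omega
    rw [hωk]
    calc Δ k ≤ ω ^ (m - 1) * (Δ 0 + 1) := hfinal
      _ = (Δ 0 + 1) / ω ^ (N + 1) * (ω ^ (N + 1) * ω ^ (m - 1)) := by
          field_simp
end

section
/- Let {Δ_k} be a non-negative, monotone non-increasing real sequence converging to 0 and suppose there exist θ ∈ (1/2, 1) and c̃ > 0 such that Δ_{k+1}^{2θ} ≤ c̃ (Δ_{k-1} − Δ_{k+1}) for all k ≥ 1. Then there exists C > 0 such that Δ_k ≤ C · k^{−1/(2θ−1)} for all k ≥ 1. -/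
/-! With `α = 2θ - 1`, the quantity `Δ k ^ (-α)` increases by a fixed amount `μ > 0` every two
steps. Write `x = Δ (k+1) ≤ y = Δ (k-1)`. If `y ≤ 2x`, Bernoulli's inequality and the recurrence
give `x ^ (-α) - y ^ (-α) ≥ α x / (c y) ≥ α / (2c)`; if `y > 2x`, then `y ^ (-α) ≤ 2 ^ (-α) x ^ (-α)`
and the increment is at least `(1 - 2 ^ (-α)) (Δ 0 + 1) ^ (-α)`. Hence `Δ k ^ (-α) ≥ μ k / 2`,
which is the claimed bound `Δ k ≤ (μ / 2) ^ (-1/α) k ^ (-1/α)`. -/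

open Real

theorem mul_one_sub_le_one_sub_rpow {s α : ℝ} (hs0 : 0 ≤ s) (hα0 : 0 ≤ α) (hα1 : α ≤ 1) :
    α * (1 - s) ≤ 1 - s ^ α := by
  have h := rpow_one_add_le_one_add_mul_self (s := s - 1) (by linarith) hα0 hα1
  rw [add_sub_cancel] at h
  linarith

theorem div_le_rpow_neg_sub_rpow_neg {x y α c : ℝ} (hα0 : 0 ≤ α) (hα1 : α ≤ 1) (hc : 0 < c)
    (hx : 0 < x) (hxy : x ≤ y) (hrec : x ^ (1 + α) ≤ c * (y - x)) :
    α * x / (c * y) ≤ x ^ (-α) - y ^ (-α) := by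
  have hy : 0 < y := hx.trans_le hxy
  have hsplit : x ^ (-α) - y ^ (-α) = x ^ (-α) * (1 - (x / y) ^ α) := by
    rw [div_rpow hx.le hy.le, rpow_neg hx.le, rpow_neg hy.le]
    field_simp
  have hx1α : x ^ (1 + α) = x * x ^ α := by rw [rpow_add hx, rpow_one]
  calc α * x / (c * y) = x ^ (-α) * α * (x ^ (1 + α) / c / y) := by
        rw [hx1α, rpow_neg hx.le]; field_simp
    _ ≤ x ^ (-α) * α * ((y - x) / y) := by
        gcongr
        exact (div_le_iff₀' hc).2 hrec
    _ = x ^ (-α) * (α * (1 - x / y)) := by field_simp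
    _ ≤ x ^ (-α) * (1 - (x / y) ^ α) := by
        gcongr
        exact mul_one_sub_le_one_sub_rpow (by positivity) hα0 hα1
    _ = x ^ (-α) - y ^ (-α) := hsplit.symm

theorem min_le_rpow_neg_sub_rpow_neg {x y M α c : ℝ} (hα0 : 0 ≤ α) (hα1 : α ≤ 1) (hc : 0 < c)
    (hx : 0 < x) (hxy : x ≤ y) (hyM : y ≤ M) (hrec : x ^ (1 + α) ≤ c * (y - x)) :
    min (α / (2 * c)) ((1 - 2 ^ (-α)) * M ^ (-α)) ≤ x ^ (-α) - y ^ (-α) := by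
  rcases le_or_gt y (2 * x) with hy2x | h2xy
  · refine (min_le_left _ _).trans
      (le_trans ?_ (div_le_rpow_neg_sub_rpow_neg hα0 hα1 hc hx hxy hrec))
    rw [div_le_div_iff₀ (by positivity) (by nlinarith)]
    nlinarith [mul_nonneg (mul_nonneg hα0 hc.le) (sub_nonneg.2 hy2x)]
  · refine (min_le_right _ _).trans ?_
    have hy_le : y ^ (-α) ≤ 2 ^ (-α) * x ^ (-α) := by
      rw [← mul_rpow zero_le_two hx.le]
      exact rpow_le_rpow_of_nonpos (by positivity) h2xy.le (by linarith)
    have hM_le : M ^ (-α) ≤ x ^ (-α) :=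
      rpow_le_rpow_of_nonpos hx (hxy.trans hyM) (by linarith)
    have h2α : 2 ^ (-α) ≤ (1 : ℝ) := rpow_le_one_of_one_le_of_nonpos one_le_two (by linarith)
    nlinarith

theorem mul_le_rpow_of_two_step {Δ : ℕ → ℝ} {p ν : ℝ} (hanti : Antitone Δ)
    (h1 : 0 < Δ 1 → ν ≤ Δ 1 ^ p)
    (hstep : ∀ n, 0 < Δ (n + 2) → 2 * ν ≤ Δ (n + 2) ^ p - Δ n ^ p) :
    ∀ n, 0 < Δ n → ν * n ≤ Δ n ^ p
  | 0, h0 => by simpa using (rpow_pos_of_pos h0 p).le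
  | 1, h => by simpa using h1 h
  | n + 2, h => by
    have ih := mul_le_rpow_of_two_step hanti h1 hstep n (h.trans_le (hanti (by omega)))
    have := hstep n h
    push_cast
    linarith

theorem stmt1_general (Δ : ℕ → ℝ) (hnn : ∀ k, 0 ≤ Δ k) (hmono : ∀ k, Δ (k+1) ≤ Δ k)
    (θ c : ℝ) (hθ0 : 1/2 < θ) (hθ1 : θ < 1) (hc : 0 < c)
    (hrec : ∀ k : ℕ, 1 ≤ k → (Δ (k+1)) ^ (2*θ) ≤ c * (Δ (k-1) - Δ (k+1))) :
    ∃ C > 0, ∀ k : ℕ, 1 ≤ k → Δ k ≤ C * (k : ℝ) ^ (-(1/(2*θ - 1))) := by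
  set α := 2 * θ - 1 with hα
  have hα0 : 0 < α := by linarith
  have hanti : Antitone Δ := antitone_nat_of_succ_le hmono
  set M := Δ 0 + 1
  have hM : 0 < M := by linarith [hnn 0]
  set μ := min (α / (2 * c)) ((1 - 2 ^ (-α)) * M ^ (-α))
  have hμ : 0 < μ := by
    have : 2 ^ (-α) < (1 : ℝ) := rpow_lt_one_of_one_lt_of_neg one_lt_two (by linarith)
    exact lt_min (by positivity) (mul_pos (by linarith) (by positivity))
  have hgrowth : ∀ n, 0 < Δ n → μ / 2 * n ≤ Δ n ^ (-α) := by
    refine mul_le_rpow_of_two_step hanti (fun h => ?_) (fun n h => ?_)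
    · calc μ / 2 ≤ μ := by linarith
        _ ≤ (1 - 2 ^ (-α)) * M ^ (-α) := min_le_right _ _
        _ ≤ M ^ (-α) := mul_le_of_le_one_left (by positivity) (by simp [rpow_nonneg])
        _ ≤ Δ 1 ^ (-α) :=
          rpow_le_rpow_of_nonpos h (by linarith [hanti (zero_le_one' ℕ)]) (by linarith)
    · have hrec' : Δ (n + 2) ^ (1 + α) ≤ c * (Δ n - Δ (n + 2)) := by
        simpa [hα] using hrec (n + 1) (by omega)
      have := min_le_rpow_neg_sub_rpow_neg (M := M) hα0.le (by linarith) hc h (hanti (by omega))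
        (by linarith [hanti (Nat.zero_le n)]) hrec'
      linarith
  refine ⟨(μ / 2) ^ (-(1 / α)), by positivity, fun k _ => ?_⟩
  rcases (hnn k).eq_or_lt with h0 | hpos
  · rw [← h0]
    positivity
  · have hinv : -(1 / α) = (-α)⁻¹ := by rw [one_div, inv_neg]
    rw [← mul_rpow (by positivity) (Nat.cast_nonneg k), hinv,
      le_rpow_inv_iff_of_neg hpos (by positivity) (by linarith)]
    exact hgrowth k hpos

theorem stmt1 (Δ : ℕ → ℝ) (hnn : ∀ k, 0 ≤ Δ k) (hmono : ∀ k, Δ (k+1) ≤ Δ k)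
    (hlim : Filter.Tendsto Δ Filter.atTop (nhds 0))
    (θ c : ℝ) (hθ0 : 1/2 < θ) (hθ1 : θ < 1) (hc : 0 < c)
    (hrec : ∀ k : ℕ, 1 ≤ k → (Δ (k+1)) ^ (2*θ) ≤ c * (Δ (k-1) - Δ (k+1))) :
    ∃ C > 0, ∀ k : ℕ, 1 ≤ k → Δ k ≤ C * (k : ℝ) ^ (-(1/(2*θ - 1))) :=
  stmt1_general Δ hnn hmono θ c hθ0 hθ1 hc hrec
end

section
/- Under the setting of the inexact inertial proximal–gradient step: let 0 < α ≤ α_max, μ > 0, D symmetric positive definite with (1/μ)I ⪯ D ⪯ μI, h the strongly convex model function with minimizer ŷ, and let ỹ satisfy h(ỹ) ≤ (2/(2+τ)) h(ŷ) for τ ≥ 0. Then ‖ŷ − x‖² ≤ 2 α_max μ (1 + τ/2)(−h(ỹ)). -/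
open Matrix

/-- Action of a matrix on a vector of `EuclideanSpace ℝ (Fin n)`. -/
noncomputable def mulVecE {n : ℕ} (D : Matrix (Fin n) (Fin n) ℝ)
    (v : EuclideanSpace ℝ (Fin n)) : EuclideanSpace ℝ (Fin n) :=
  (WithLp.equiv 2 (Fin n → ℝ)).symm (D *ᵥ fun i => v i)

/-- The quadratic form `⟨v, D v⟩` (i.e. `‖v‖_D²`). -/
noncomputable def quadE {n : ℕ} (D : Matrix (Fin n) (Fin n) ℝ)
    (v : EuclideanSpace ℝ (Fin n)) : ℝ :=
  (fun i => v i) ⬝ᵥ (D *ᵥ fun i => v i)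

/-!
Write `v = ŷ - x` and `q = ‖·‖_D² / (2α)`. Comparing `h ŷ` with `h` on the segment from `ŷ` towards `x`,
where the quadratic part shrinks by the factor `(1-t)²` while the convex part is at most affine,
and letting `t → 0` gives the sharpened minimality `h ŷ ≤ -q v`. Hence
`‖v‖² ≤ μ ‖v‖_D² ≤ 2αμ (-h ŷ)`, and the inexactness condition turns `-h ŷ` into `(1 + τ/2)(-h ỹ)`.
-/

open Set Filter Topology

theorem add_two_mul_le_of_isMinOn_add_quadratic {E : Type*} [AddCommGroup E] [Module ℝ E]
    {ψ q : E → ℝ} (hψ : ConvexOn ℝ univ ψ) (hq : ∀ (s : ℝ) (u : E), q (s • u) = s ^ 2 * q u)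
    {x y : E} (hy : IsMinOn (fun z => ψ z + q (z - x)) univ y) :
    ψ y + 2 * q (y - x) ≤ ψ x := by
  have along_segment : ∀ t ∈ Ioo (0 : ℝ) 1, ψ y + (2 - t) * q (y - x) ≤ ψ x := by
    rintro t ⟨ht0, ht1⟩
    have hmin : ψ y + q (y - x) ≤ ψ ((1 - t) • y + t • x) + q (((1 - t) • y + t • x) - x) :=
      hy (mem_univ _)
    have hshift : ((1 - t) • y + t • x) - x = (1 - t) • (y - x) := by module
    have hconv : ψ ((1 - t) • y + t • x) ≤ (1 - t) * ψ y + t * ψ x :=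
      hψ.2 (mem_univ _) (mem_univ _) (by linarith) ht0.le (by ring)
    rw [hshift, hq] at hmin
    have : t * (ψ y + (2 - t) * q (y - x)) ≤ t * ψ x := by nlinarith
    exact le_of_mul_le_mul_left this ht0
  have hlim : Tendsto (fun t : ℝ => ψ y + (2 - t) * q (y - x)) (𝓝[>] 0)
      (𝓝 (ψ y + (2 - 0) * q (y - x))) :=
    ((continuous_const.add ((continuous_const.sub continuous_id).mul continuous_const)).tendsto
      0).mono_left nhdsWithin_le_nhds
  have := le_of_tendsto hlim (eventually_of_mem (Ioo_mem_nhdsGT one_pos) along_segment)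
  linarith

theorem convexOn_inner_sub_add_sub {E : Type*} [NormedAddCommGroup E] [InnerProductSpace ℝ E]
    {φ : E → ℝ} (hφ : ConvexOn ℝ univ φ) (c x : E) :
    ConvexOn ℝ univ (fun y => inner ℝ c (y - x) + φ y - φ x) := by
  refine ⟨convex_univ, fun a _ b _ s t hs ht hst => ?_⟩
  have hφab : φ (s • a + t • b) ≤ s * φ a + t * φ b := hφ.2 (mem_univ a) (mem_univ b) hs ht hst
  have hinner : inner ℝ c (s • a + t • b - x) = s * inner ℝ c (a - x) + t * inner ℝ c (b - x) := by
    rw [show s • a + t • b - x = s • (a - x) + t • (b - x) + (s + t - 1) • x by module, hst,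
      sub_self, zero_smul, add_zero, inner_add_right, real_inner_smul_right, real_inner_smul_right]
  simp only [smul_eq_mul, hinner]
  linear_combination hφab + (φ x) * hst

theorem quadE_smul {n : ℕ} (D : Matrix (Fin n) (Fin n) ℝ) (s : ℝ) (u : EuclideanSpace ℝ (Fin n)) :
    quadE D (s • u) = s ^ 2 * quadE D u := by
  change (s • u.ofLp) ⬝ᵥ (D *ᵥ (s • u.ofLp)) = s ^ 2 * (u.ofLp ⬝ᵥ (D *ᵥ u.ofLp))
  rw [mulVec_smul, smul_dotProduct, dotProduct_smul, smul_eq_mul, smul_eq_mul]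
  ring

theorem norm_sq_le_mul_quadE {n : ℕ} {D : Matrix (Fin n) (Fin n) ℝ} {μ : ℝ} (hμ : 0 < μ)
    (hlow : ∀ v : Fin n → ℝ, (1/μ) * (v ⬝ᵥ v) ≤ v ⬝ᵥ (D *ᵥ v)) (v : EuclideanSpace ℝ (Fin n)) :
    ‖v‖ ^ 2 ≤ μ * quadE D v := by
  have hdot : v.ofLp ⬝ᵥ v.ofLp = ‖v‖ ^ 2 := by
    rw [← real_inner_self_eq_norm_sq, EuclideanSpace.inner_eq_star_dotProduct]
    rfl
  have := hlow v.ofLp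
  rw [hdot] at this
  calc ‖v‖ ^ 2 = μ * ((1/μ) * ‖v‖ ^ 2) := by field_simp
    _ ≤ μ * quadE D v := mul_le_mul_of_nonneg_left this hμ.le

theorem stmt6_general {n : ℕ} (f : EuclideanSpace ℝ (Fin n) → ℝ)
    (φ : EuclideanSpace ℝ (Fin n) → ℝ) (hconv : ConvexOn ℝ Set.univ φ)
    (α αmax β τ μ : ℝ) (hα : 0 < α) (hαmax : α ≤ αmax) (hτ : 0 ≤ τ) (hμ : 0 < μ)
    (D : Matrix (Fin n) (Fin n) ℝ)
    (hlow : ∀ v : Fin n → ℝ, (1/μ) * (v ⬝ᵥ v) ≤ v ⬝ᵥ (D *ᵥ v))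
    (x w : EuclideanSpace ℝ (Fin n))
    (h : EuclideanSpace ℝ (Fin n) → ℝ)
    (hh : h = fun y => (inner ℝ (gradient f x - (β/α) • mulVecE D (x - w)) (y - x) : ℝ)
      + (1/(2*α)) * quadE D (y - x) + φ y - φ x)
    (yhat ytil : EuclideanSpace ℝ (Fin n)) (hmin : IsMinOn h Set.univ yhat)
    (happrox : h ytil ≤ (2/(2+τ)) * h yhat) :
    ‖yhat - x‖^2 ≤ 2 * αmax * μ * (1 + τ/2) * (-h ytil) := by
  set c := gradient f x - (β/α) • mulVecE D (x - w)
  set ψ := fun y => inner ℝ c (y - x) + φ y - φ x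
  set q := fun u => (1/(2*α)) * quadE D u
  have hsplit : h = fun y => ψ y + q (y - x) := by rw [hh]; funext y; simp only [ψ, q]; ring
  have hsharp : ψ yhat + 2 * q (yhat - x) ≤ ψ x :=
    add_two_mul_le_of_isMinOn_add_quadratic (convexOn_inner_sub_add_sub hconv c x)
      (fun s u => by simp only [q, quadE_smul]; ring) (hsplit ▸ hmin)
  have hψx : ψ x = 0 := by simp [ψ]
  have hnorm := norm_sq_le_mul_quadE hμ hlow (yhat - x)
  have hhyhat : h yhat = ψ yhat + q (yhat - x) := by rw [hsplit]
  have hquad : quadE D (yhat - x) ≤ 2 * α * (-h yhat) := by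
    have hqv : q (yhat - x) ≤ -h yhat := by linarith
    calc quadE D (yhat - x) = 2 * α * q (yhat - x) := by simp only [q]; field_simp
      _ ≤ 2 * α * (-h yhat) := by gcongr
  have hinexact : -h yhat ≤ (1 + τ/2) * (-h ytil) := by
    have hscale : (1 + τ/2) * (2/(2+τ)) = 1 := by field_simp
    have := mul_le_mul_of_nonneg_left happrox (by linarith : 0 ≤ 1 + τ/2)
    rw [← mul_assoc, hscale, one_mul] at this
    linarith
  have hyhat : 0 ≤ -h yhat := by
    have hq0 : 0 ≤ quadE D (yhat - x) :=
      nonneg_of_mul_nonneg_right ((sq_nonneg _).trans hnorm) hμ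
    exact nonneg_of_mul_nonneg_right (hq0.trans hquad) (by positivity)
  calc ‖yhat - x‖^2 ≤ μ * (2 * α * (-h yhat)) := hnorm.trans (by gcongr)
    _ ≤ μ * (2 * αmax * ((1 + τ/2) * (-h ytil))) := by gcongr; linarith
    _ = 2 * αmax * μ * (1 + τ/2) * (-h ytil) := by ring

theorem stmt6 {n : ℕ} (f : EuclideanSpace ℝ (Fin n) → ℝ) (hf : ContDiff ℝ 1 f)
    (φ : EuclideanSpace ℝ (Fin n) → ℝ) (hconv : ConvexOn ℝ Set.univ φ)
    (hlsc : LowerSemicontinuous φ)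
    (α αmax β τ μ : ℝ) (hα : 0 < α) (hαmax : α ≤ αmax) (hβ : 0 < β) (hτ : 0 ≤ τ) (hμ : 0 < μ)
    (D : Matrix (Fin n) (Fin n) ℝ) (hsym : D.IsSymm) (hpd : D.PosDef)
    (hlow : ∀ v : Fin n → ℝ, (1/μ) * (v ⬝ᵥ v) ≤ v ⬝ᵥ (D *ᵥ v))
    (hup : ∀ v : Fin n → ℝ, v ⬝ᵥ (D *ᵥ v) ≤ μ * (v ⬝ᵥ v))
    (x w : EuclideanSpace ℝ (Fin n))
    (h : EuclideanSpace ℝ (Fin n) → ℝ)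
    (hh : h = fun y => (inner ℝ (gradient f x - (β/α) • mulVecE D (x - w)) (y - x) : ℝ)
      + (1/(2*α)) * quadE D (y - x) + φ y - φ x)
    (yhat ytil : EuclideanSpace ℝ (Fin n)) (hmin : IsMinOn h Set.univ yhat)
    (happrox : h ytil ≤ (2/(2+τ)) * h yhat) :
    ‖yhat - x‖^2 ≤ 2 * αmax * μ * (1 + τ/2) * (-h ytil) :=
  stmt6_general f φ hconv α αmax β τ μ hα hαmax hτ hμ D hlow x w h hh yhat ytil hmin happrox
end

section
/- In the same setting: ‖ỹ − x‖² ≤ 2 α_max μ (√(1 + τ/2) + √(τ/2))² (−h(ỹ)). -/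
open Matrix

/-!
The model `h` is a quadratic `(1/2α)‖· - x‖²_D` plus a convex function, so it grows quadratically
away from its minimizer: `h ŷ + ‖y - ŷ‖²_D / (2α) ≤ h y`. At `y = x`, where `h` vanishes, and at
`y = ỹ`, together with `h ŷ ≥ (1 + τ/2) h ỹ`, this gives `‖x - ŷ‖²_D ≤ 2α(1 + τ/2)(-h ỹ)` and
`‖ỹ - ŷ‖²_D ≤ 2α(τ/2)(-h ỹ)`. The triangle inequality for the seminorm `‖·‖_D` and
`‖·‖² ≤ μ‖·‖²_D` conclude.
-/

open Set Filter Topology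

namespace QuadraticMap

variable {E : Type*} [AddCommGroup E] [Module ℝ E] (Q : QuadraticMap ℝ E ℝ)

theorem map_one_sub_smul_add_smul (u v : E) (t : ℝ) :
    Q ((1 - t) • u + t • v) = (1 - t) * Q u + t * Q v - t * (1 - t) * Q (v - u) := by
  obtain ⟨d, rfl⟩ : ∃ d, v = u + d := ⟨v - u, by abel⟩
  rw [show (1 - t) • u + t • (u + d) = u + t • d by module, add_sub_cancel_left,
    QuadraticMap.map_add Q, QuadraticMap.map_add Q, QuadraticMap.map_smul, polar_smul_right,
    smul_eq_mul, smul_eq_mul]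
  ring

theorem sq_polar_le (hQ : ∀ x, 0 ≤ Q x) (u v : E) : polar Q u v ^ 2 ≤ 4 * Q u * Q v := by
  have := LinearMap.BilinForm.apply_mul_apply_le_of_forall_zero_le (polarBilin Q)
    (fun x => by simpa using mul_nonneg zero_le_two (hQ x)) u v
  simp only [polarBilin_apply_apply, polar_self, nsmul_eq_mul, Nat.cast_ofNat] at this
  rw [polar_comm Q v u] at this
  linarith

theorem map_add_le_sq_add (hQ : ∀ x, 0 ≤ Q x) {u v : E} {a b : ℝ} (ha : 0 ≤ a) (hb : 0 ≤ b)
    (hu : Q u ≤ a ^ 2) (hv : Q v ≤ b ^ 2) : Q (u + v) ≤ (a + b) ^ 2 := by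
  have hpolar : polar Q u v ≤ 2 * a * b := by
    refine (le_abs_self _).trans (abs_le_of_sq_le_sq ?_ (by positivity))
    calc polar Q u v ^ 2 ≤ 4 * Q u * Q v := sq_polar_le Q hQ u v
      _ ≤ 4 * a ^ 2 * b ^ 2 := by gcongr; exact hQ v
      _ = (2 * a * b) ^ 2 := by ring
  rw [QuadraticMap.map_add Q]
  linarith

end QuadraticMap

namespace IsMinOn

variable {E : Type*} {h : E → ℝ} {x yhat ytil : E} {τ : ℝ}

theorem nonpos_of_le_two_div_mul (hτ : 0 ≤ τ) (hx : h x = 0) (hmin : IsMinOn h univ yhat)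
    (happrox : h ytil ≤ 2 / (2 + τ) * h yhat) : h ytil ≤ 0 :=
  happrox.trans (mul_nonpos_of_nonneg_of_nonpos (by positivity) (hx ▸ hmin (mem_univ x)))

variable [AddCommGroup E] [Module ℝ E]

theorem add_quadratic_le_of_convexOn_sub {Q : QuadraticMap ℝ E ℝ} {x₀ a : E}
    (hconv : ConvexOn ℝ univ fun y => h y - Q (y - x₀)) (hmin : IsMinOn h univ a) (b : E) :
    h a + Q (b - a) ≤ h b := by
  -- compare `h a` with `h` at `(1 - t) • a + t • b`, where `Q` falls short of convexity by
  -- exactly `t (1 - t) Q (b - a)`, then let `t → 0`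
  have key : ∀ t ∈ Ioo (0 : ℝ) 1, (1 - t) * Q (b - a) ≤ h b - h a := by
    rintro t ⟨ht0, ht1⟩
    have hz := hconv.2 (mem_univ a) (mem_univ b) (sub_nonneg.2 ht1.le) ht0.le (sub_add_cancel 1 t)
    have hQz := Q.map_one_sub_smul_add_smul (a - x₀) (b - x₀) t
    rw [show (1 - t) • (a - x₀) + t • (b - x₀) = (1 - t) • a + t • b - x₀ by module,
      sub_sub_sub_cancel_right] at hQz
    have hmin_z : h a ≤ h ((1 - t) • a + t • b) := hmin (mem_univ _)
    simp only [smul_eq_mul] at hz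
    have : t * ((1 - t) * Q (b - a)) ≤ t * (h b - h a) := by linarith
    exact le_of_mul_le_mul_left this ht0
  have hlim : Tendsto (fun t : ℝ => (1 - t) * Q (b - a)) (𝓝[>] 0) (𝓝 (Q (b - a))) := by
    have : Continuous fun t : ℝ => (1 - t) * Q (b - a) := by fun_prop
    simpa using (this.tendsto 0).mono_left nhdsWithin_le_nhds
  have := le_of_tendsto hlim (eventually_of_mem (Ioo_mem_nhdsGT one_pos) key)
  linarith

theorem map_sub_le_of_le_two_div_mul {Q : QuadraticMap ℝ E ℝ} (hQ : ∀ v, 0 ≤ Q v) (hτ : 0 ≤ τ)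
    (hx : h x = 0) (hconv : ConvexOn ℝ univ fun y => h y - Q (y - x))
    (hmin : IsMinOn h univ yhat) (happrox : h ytil ≤ 2 / (2 + τ) * h yhat) :
    Q (ytil - x) ≤ (√(1 + τ / 2) + √(τ / 2)) ^ 2 * (-h ytil) := by
  have growth := hmin.add_quadratic_le_of_convexOn_sub hconv
  have hytil := neg_nonneg.2 (hmin.nonpos_of_le_two_div_mul hτ hx happrox)
  have hratio : (1 + τ / 2) * h ytil ≤ h yhat := by
    have := mul_le_mul_of_nonneg_left happrox (by positivity : (0 : ℝ) ≤ 1 + τ / 2)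
    rwa [← mul_assoc, show (1 + τ / 2) * (2 / (2 + τ)) = 1 by field_simp, one_mul] at this
  have hsq : ∀ r, 0 ≤ r → (√r * √(-h ytil)) ^ 2 = r * (-h ytil) := fun r hr => by
    rw [mul_pow, Real.sq_sqrt hr, Real.sq_sqrt hytil]
  have hfar : Q (yhat - x) ≤ (√(1 + τ / 2) * √(-h ytil)) ^ 2 := by
    rw [hsq _ (by positivity), Q.map_sub]
    linarith [growth x]
  have hnear : Q (ytil - yhat) ≤ (√(τ / 2) * √(-h ytil)) ^ 2 := by
    rw [hsq _ (by positivity)]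
    linarith [growth ytil]
  calc Q (ytil - x) = Q ((yhat - x) + (ytil - yhat)) := by rw [sub_add_sub_cancel']
    _ ≤ (√(1 + τ / 2) * √(-h ytil) + √(τ / 2) * √(-h ytil)) ^ 2 :=
        Q.map_add_le_sq_add hQ (by positivity) (by positivity) hfar hnear
    _ = (√(1 + τ / 2) + √(τ / 2)) ^ 2 * (-h ytil) := by
        rw [← add_mul, mul_pow, Real.sq_sqrt hytil]

end IsMinOn

section Euclidean

variable {n : ℕ}

noncomputable def quadForm (D : Matrix (Fin n) (Fin n) ℝ) :
    QuadraticMap ℝ (EuclideanSpace ℝ (Fin n)) ℝ :=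
  D.toQuadraticForm'.comp (EuclideanSpace.equiv (Fin n) ℝ).toLinearMap

theorem quadForm_apply (D : Matrix (Fin n) (Fin n) ℝ) (v : EuclideanSpace ℝ (Fin n)) :
    quadForm D v = quadE D v :=
  Matrix.toLinearMap₂'_apply' D _ _

theorem sq_norm_eq_dotProduct (v : EuclideanSpace ℝ (Fin n)) :
    ‖v‖ ^ 2 = (fun i => v i) ⬝ᵥ (fun i => v i) := by
  rw [EuclideanSpace.real_norm_sq_eq]
  simp [dotProduct, _root_.sq]

variable {D : Matrix (Fin n) (Fin n) ℝ} {μ : ℝ}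

theorem sq_norm_le_mul_quadE (hμ : 0 < μ)
    (hlow : ∀ v : Fin n → ℝ, (1/μ) * (v ⬝ᵥ v) ≤ v ⬝ᵥ (D *ᵥ v)) (v : EuclideanSpace ℝ (Fin n)) :
    ‖v‖ ^ 2 ≤ μ * quadE D v := by
  have := mul_le_mul_of_nonneg_left (hlow fun i => v i) hμ.le
  rwa [← mul_assoc, mul_one_div_cancel hμ.ne', one_mul, ← sq_norm_eq_dotProduct] at this

theorem quadE_nonneg (hμ : 0 < μ)
    (hlow : ∀ v : Fin n → ℝ, (1/μ) * (v ⬝ᵥ v) ≤ v ⬝ᵥ (D *ᵥ v)) (v : EuclideanSpace ℝ (Fin n)) :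
    0 ≤ quadE D v :=
  nonneg_of_mul_nonneg_right ((sq_nonneg ‖v‖).trans (sq_norm_le_mul_quadE hμ hlow v)) hμ

end Euclidean

theorem stmt8_general {n : ℕ} (f : EuclideanSpace ℝ (Fin n) → ℝ)
    (φ : EuclideanSpace ℝ (Fin n) → ℝ) (hconv : ConvexOn ℝ Set.univ φ)
    (α αmax β τ μ : ℝ) (hα : 0 < α) (hαmax : α ≤ αmax) (hτ : 0 ≤ τ) (hμ : 0 < μ)
    (D : Matrix (Fin n) (Fin n) ℝ)
    (hlow : ∀ v : Fin n → ℝ, (1/μ) * (v ⬝ᵥ v) ≤ v ⬝ᵥ (D *ᵥ v))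
    (x w : EuclideanSpace ℝ (Fin n))
    (h : EuclideanSpace ℝ (Fin n) → ℝ)
    (hh : h = fun y => (inner ℝ (gradient f x - (β/α) • mulVecE D (x - w)) (y - x) : ℝ)
      + (1/(2*α)) * quadE D (y - x) + φ y - φ x)
    (yhat ytil : EuclideanSpace ℝ (Fin n)) (hmin : IsMinOn h Set.univ yhat)
    (happrox : h ytil ≤ (2/(2+τ)) * h yhat) :
    ‖ytil - x‖^2 ≤ 2 * αmax * μ * (Real.sqrt (1 + τ/2) + Real.sqrt (τ/2))^2 * (-h ytil) := by
  set g := gradient f x - (β/α) • mulVecE D (x - w)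
  set Q := (1 / (2 * α)) • quadForm D
  have hQ : ∀ v, Q v = 1 / (2 * α) * quadE D v := fun v => by simp [Q, quadForm_apply]
  have hx : h x = 0 := by simp [hh, quadE]
  have hconvQ : ConvexOn ℝ univ fun y => h y - Q (y - x) := by
    have : (fun y => h y - Q (y - x)) = fun y => (innerₛₗ ℝ g y + φ y) + (-inner ℝ g x - φ x) := by
      ext y; simp [hh, hQ, inner_sub_right]; ring
    rw [this]
    exact (((innerₛₗ ℝ g).convexOn convex_univ).add hconv).add_const _
  have hbound := hmin.map_sub_le_of_le_two_div_mul
    (fun v => (hQ v).symm ▸ mul_nonneg (by positivity) (quadE_nonneg hμ hlow v))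
    hτ hx hconvQ happrox
  rw [hQ, one_div, inv_mul_le_iff₀ (by positivity)] at hbound
  have hytil := neg_nonneg.2 (hmin.nonpos_of_le_two_div_mul hτ hx happrox)
  calc ‖ytil - x‖ ^ 2 ≤ μ * quadE D (ytil - x) := sq_norm_le_mul_quadE hμ hlow _
    _ ≤ μ * (2 * α * ((√(1 + τ / 2) + √(τ / 2)) ^ 2 * (-h ytil))) := by gcongr
    _ ≤ 2 * αmax * μ * (√(1 + τ / 2) + √(τ / 2)) ^ 2 * (-h ytil) := by
      rw [mul_left_comm, ← mul_assoc, mul_assoc (2 * αmax * μ)]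
      exact mul_le_mul_of_nonneg_right (by gcongr) (mul_nonneg (sq_nonneg _) hytil)

theorem stmt8 {n : ℕ} (f : EuclideanSpace ℝ (Fin n) → ℝ) (hf : ContDiff ℝ 1 f)
    (φ : EuclideanSpace ℝ (Fin n) → ℝ) (hconv : ConvexOn ℝ Set.univ φ)
    (hlsc : LowerSemicontinuous φ)
    (α αmax β τ μ : ℝ) (hα : 0 < α) (hαmax : α ≤ αmax) (hβ : 0 < β) (hτ : 0 ≤ τ) (hμ : 0 < μ)
    (D : Matrix (Fin n) (Fin n) ℝ) (hsym : D.IsSymm) (hpd : D.PosDef)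
    (hlow : ∀ v : Fin n → ℝ, (1/μ) * (v ⬝ᵥ v) ≤ v ⬝ᵥ (D *ᵥ v))
    (hup : ∀ v : Fin n → ℝ, v ⬝ᵥ (D *ᵥ v) ≤ μ * (v ⬝ᵥ v))
    (x w : EuclideanSpace ℝ (Fin n))
    (h : EuclideanSpace ℝ (Fin n) → ℝ)
    (hh : h = fun y => (inner ℝ (gradient f x - (β/α) • mulVecE D (x - w)) (y - x) : ℝ)
      + (1/(2*α)) * quadE D (y - x) + φ y - φ x)
    (yhat ytil : EuclideanSpace ℝ (Fin n)) (hmin : IsMinOn h Set.univ yhat)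
    (happrox : h ytil ≤ (2/(2+τ)) * h yhat) :
    ‖ytil - x‖^2 ≤ 2 * αmax * μ * (Real.sqrt (1 + τ/2) + Real.sqrt (τ/2))^2 * (-h ytil) :=
  stmt8_general f φ hconv α αmax β τ μ hα hαmax hτ hμ D hlow x w h hh yhat ytil hmin happrox
end
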